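/- Small object argument: if M is a set of morphisms with finitely presentable domains and codomains in a cocomplete locally small category, then the injectivity class M^⋔ is a weakly reflective subcategory; if moreover M is strong, M^⋔ = M^⊥ is a reflective subcategory. -/

import Mathlib

open CategoryTheory Limits

universe v u

variable {C : Type u} [Category.{v} C]

/-- `X` is injective to `f` if every map from the domain of `f` to `X` extends along `f`. -/
def Inj {A B : C} (f : A ⟶ B) (X : C) : Prop :=
  ∀ a : A ⟶ X, ∃ b : B ⟶ X, f ≫ b = a

/-- `X` is orthogonal to `f` if every map from the domain of `f` to `X` extends uniquely. -/
def Orth {A B : C} (f : A ⟶ B) (X : C) : Prop :=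
  ∀ a : A ⟶ X, ∃! b : B ⟶ X, f ≫ b = a

/-- `X` is injective to every morphism of the class `M`. -/
def MInj (M : MorphismProperty C) (X : C) : Prop :=
  ∀ ⦃A B : C⦄ (f : A ⟶ B), M f → Inj f X

/-- `X` is orthogonal to every morphism of the class `M`. -/
def MOrth (M : MorphismProperty C) (X : C) : Prop :=
  ∀ ⦃A B : C⦄ (f : A ⟶ B), M f → Orth f X

/-- A class of morphisms is strong if its injectivity class coincides with its
orthogonality class. -/
def Strong (M : MorphismProperty C) : Prop := ∀ X : C, MInj M X ↔ MOrth M X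

/-- `η : X ⟶ X'` is a weak reflection of `X` into the full subcategory of objects
satisfying `P` if `X'` satisfies `P` and every map from `X` to an object satisfying `P`
factors through `η`. -/
def IsWeakReflection (P : C → Prop) {X X' : C} (η : X ⟶ X') : Prop :=
  P X' ∧ ∀ ⦃Y : C⦄, P Y → ∀ g : X ⟶ Y, ∃ h : X' ⟶ Y, η ≫ h = g

/-- `η : X ⟶ X'` is a reflection if moreover the factorizations are unique. -/
def IsReflection (P : C → Prop) {X X' : C} (η : X ⟶ X') : Prop :=
  P X' ∧ ∀ ⦃Y : C⦄, P Y → ∀ g : X ⟶ Y, ∃! h : X' ⟶ Y, η ≫ h = g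

/-- An object is finitely presentable if its covariant hom-functor preserves filtered
colimits. -/
def FinPres (A : C) : Prop :=
  PreservesFilteredColimits (coyoneda.obj (Opposite.op A))

/-!
Adjoin to `X`, by one pushout of a coproduct of copies of the `f i`, an extension of every map
`A i ⟶ X`, and iterate this `ω` times. As `A i` is finitely presentable, a map from `A i` into
the colimit factors through a finite stage and is extended at the next one, so the colimit is
injective. A map from `X` to an injective object extends stage by stage; when the target is
orthogonal, these extensions are unique, because a map out of a stage is determined by its
restrictions to the previous stage and to the adjoined copies of the `B i`, and the latter are
forced by orthogonality. Strongness makes the injective colimit orthogonal.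
-/

universe w

lemma Orth.inj {A B : C} {f : A ⟶ B} {X : C} (h : Orth f X) : Inj f X :=
  fun a => (h a).exists

lemma FinPres.exists_hom_of_colimit {P : C} (hP : FinPres P) {J : Type} [SmallCategory J]
    [IsFiltered J] (F : J ⥤ C) [HasColimit F] (a : P ⟶ colimit F) :
    ∃ (j : J) (a' : P ⟶ F.obj j), a' ≫ colimit.ι F j = a :=
  have : PreservesFilteredColimits (coyoneda.obj (Opposite.op P)) := hP
  have := preservesSmallestFilteredColimits_of_preservesFilteredColimits
    (coyoneda.obj (Opposite.op P))
  exists_hom_of_preservesColimit_coyoneda (colimit.isColimit F) a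

namespace SmallObjectArgument

variable {ι : Type w} {A B : ι → C} (f : ∀ i, A i ⟶ B i)

section Step

variable [HasCoproducts.{max w v} C] [HasPushouts C] (X : C)

noncomputable abbrev step : C :=
  pushout (Limits.Sigma.desc fun s : Σ i, (A i ⟶ X) => s.2)
    (Limits.Sigma.map fun s : Σ i, (A i ⟶ X) => f s.1)

noncomputable def toStep : X ⟶ step f X := pushout.inl _ _

noncomputable def extStep (s : Σ i, (A i ⟶ X)) : B s.1 ⟶ step f X :=
  Limits.Sigma.ι (fun s : Σ i, (A i ⟶ X) => B s.1) s ≫ pushout.inr _ _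

lemma comp_extStep (s : Σ i, (A i ⟶ X)) : f s.1 ≫ extStep f X s = s.2 ≫ toStep f X := by
  rw [extStep, ← Limits.Sigma.ι_map_assoc (fun s : Σ i, (A i ⟶ X) => f s.1), ← pushout.condition,
    Limits.Sigma.ι_desc_assoc, toStep]

variable {f X}

lemma step_hom_ext {Y : C} {h h' : step f X ⟶ Y} (e : toStep f X ≫ h = toStep f X ≫ h')
    (e' : ∀ s, extStep f X s ≫ h = extStep f X s ≫ h') : h = h' :=
  pushout.hom_ext e (Limits.Sigma.hom_ext _ _ fun s => by
    simpa only [extStep, Category.assoc] using e' s)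

lemma exists_toStep_comp_eq {Y : C} (hY : ∀ i, Inj (f i) Y) (g : X ⟶ Y) :
    ∃ h : step f X ⟶ Y, toStep f X ≫ h = g := by
  choose e he using fun s : Σ i, (A i ⟶ X) => hY s.1 (s.2 ≫ g)
  refine ⟨pushout.desc g (Limits.Sigma.desc e) (Limits.Sigma.hom_ext _ _ fun s => ?_),
    pushout.inl_desc _ _ _⟩
  simp [he]

lemma toStep_hom_ext {Y : C} (hY : ∀ i, Orth (f i) Y) {h h' : step f X ⟶ Y}
    (e : toStep f X ≫ h = toStep f X ≫ h') : h = h' := by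
  refine step_hom_ext e fun s => (hY s.1 (s.2 ≫ toStep f X ≫ h)).unique ?_ ?_
  · rw [← Category.assoc, comp_extStep, Category.assoc]
  · rw [← Category.assoc, comp_extStep, Category.assoc, e]

end Step

section Chain

variable [HasCoproducts.{max w v} C] [HasPushouts C] (X : C)

noncomputable abbrev stage : ℕ → C
  | 0 => X
  | n + 1 => step f (stage n)

noncomputable def chain : ℕ ⥤ C := Functor.ofSequence fun n => toStep f (stage f X n)

variable {f X}

noncomputable def liftStage {Y : C} (hY : ∀ i, Inj (f i) Y) (g : X ⟶ Y) :
    ∀ n, stage f X n ⟶ Y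
  | 0 => g
  | n + 1 => (exists_toStep_comp_eq hY (liftStage hY g n)).choose

lemma toStep_comp_liftStage {Y : C} (hY : ∀ i, Inj (f i) Y) (g : X ⟶ Y) (n : ℕ) :
    toStep f (stage f X n) ≫ liftStage hY g (n + 1) = liftStage hY g n :=
  (exists_toStep_comp_eq hY (liftStage hY g n)).choose_spec

variable (f X) [HasColimitsOfShape ℕ C]

noncomputable def reflectionObj : C := colimit (chain f X)

noncomputable def toReflectionObj (n : ℕ) : stage f X n ⟶ reflectionObj f X :=
  colimit.ι (chain f X) n

noncomputable def reflection : X ⟶ reflectionObj f X := toReflectionObj f X 0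

lemma toStep_comp_toReflectionObj (n : ℕ) :
    toStep f (stage f X n) ≫ toReflectionObj f X (n + 1) = toReflectionObj f X n := by
  rw [← Functor.ofSequence_map_homOfLE_succ (fun n => toStep f (stage f X n)) n]
  exact colimit.w _ _

lemma inj_reflectionObj (hA : ∀ i, FinPres (A i)) (i : ι) : Inj (f i) (reflectionObj f X) := by
  intro a
  obtain ⟨n, a', rfl⟩ : ∃ (n : ℕ) (a' : A i ⟶ stage f X n), a' ≫ toReflectionObj f X n = a :=
    (hA i).exists_hom_of_colimit (chain f X) a
  refine ⟨extStep f (stage f X n) ⟨i, a'⟩ ≫ toReflectionObj f X (n + 1), ?_⟩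
  rw [← Category.assoc, comp_extStep f _ ⟨i, a'⟩, Category.assoc, toStep_comp_toReflectionObj]

variable {f X}

lemma exists_reflection_comp_eq {Y : C} (hY : ∀ i, Inj (f i) Y) (g : X ⟶ Y) :
    ∃ h : reflectionObj f X ⟶ Y, reflection f X ≫ h = g :=
  ⟨colimit.desc (chain f X) ⟨Y, NatTrans.ofSequence (liftStage hY g) fun n => by
      simp only [chain, Functor.ofSequence_map_homOfLE_succ, Functor.const_obj_map]
      exact (toStep_comp_liftStage hY g n).trans (Category.comp_id _).symm⟩,
    colimit.ι_desc _ 0⟩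

lemma reflection_hom_ext {Y : C} (hY : ∀ i, Orth (f i) Y) {h h' : reflectionObj f X ⟶ Y}
    (e : reflection f X ≫ h = reflection f X ≫ h') : h = h' := by
  refine colimit.hom_ext fun n => ?_
  change toReflectionObj f X n ≫ h = toReflectionObj f X n ≫ h'
  induction n with
  | zero => exact e
  | succ n ih =>
    refine toStep_hom_ext hY ?_
    rw [← Category.assoc, ← Category.assoc, toStep_comp_toReflectionObj]
    exact ih

variable (f X)

lemma isWeakReflection_reflection (hA : ∀ i, FinPres (A i)) :
    IsWeakReflection (fun Y => ∀ i, Inj (f i) Y) (reflection f X) :=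
  ⟨inj_reflectionObj f X hA, fun _ hY g => exists_reflection_comp_eq hY g⟩

lemma isReflection_reflection (hA : ∀ i, FinPres (A i))
    (hf : ∀ Y, (∀ i, Inj (f i) Y) → ∀ i, Orth (f i) Y) :
    IsReflection (fun Y => ∀ i, Orth (f i) Y) (reflection f X) := by
  refine ⟨hf _ (inj_reflectionObj f X hA), fun Y hY g => ?_⟩
  obtain ⟨h, hh⟩ := exists_reflection_comp_eq (fun i => (hY i).inj) g
  exact ⟨h, hh, fun h' hh' => reflection_hom_ext hY (hh'.trans hh.symm)⟩

end Chain

end SmallObjectArgument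

open SmallObjectArgument in
theorem stmt_8_general [HasColimits C] {ι : Type v} (A B : ι → C) (f : ∀ i, A i ⟶ B i)
    (hA : ∀ i, FinPres (A i)) :
    (∀ X : C, ∃ (X' : C) (η : X ⟶ X'),
        IsWeakReflection (fun Y => ∀ i, Inj (f i) Y) η) ∧
    ((∀ X : C, (∀ i, Inj (f i) X) ↔ (∀ i, Orth (f i) X)) →
      ∀ X : C, ∃ (X' : C) (η : X ⟶ X'),
        IsReflection (fun Y => ∀ i, Orth (f i) Y) η) :=
  ⟨fun X => ⟨_, _, isWeakReflection_reflection f X hA⟩,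
    fun hS X => ⟨_, _, isReflection_reflection f X hA fun Y => (hS Y).1⟩⟩

/-- The small object argument: for a set of morphisms `f i : A i ⟶ B i` with finitely
presentable domains and codomains in a cocomplete locally small category, every object
admits a weak reflection into the injectivity class; if the set is strong, every object
admits a reflection into the (then coinciding) orthogonality class. -/
theorem stmt_8 [HasColimits C] {ι : Type v} (A B : ι → C) (f : ∀ i, A i ⟶ B i)
    (hA : ∀ i, FinPres (A i)) (hB : ∀ i, FinPres (B i)) :
    (∀ X : C, ∃ (X' : C) (η : X ⟶ X'),
        IsWeakReflection (fun Y => ∀ i, Inj (f i) Y) η) ∧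
    ((∀ X : C, (∀ i, Inj (f i) X) ↔ (∀ i, Orth (f i) X)) →
      ∀ X : C, ∃ (X' : C) (η : X ⟶ X'),
        IsReflection (fun Y => ∀ i, Orth (f i) Y) η) :=
  stmt_8_general A B f hA
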